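/- Let $k$ be a field in which $-1$ is not a square. Then the ring $k[a,b]/(a^2+b^2-1)$ is not a unique factorization domain. -/

import Mathlib

/-!
Identify the ring with the quadratic algebra `k[y][ω]`, `ω² = 1 - y²`, whose norm is
`N(p + qω) = p² + (y² - 1) q² = p² + (y q)² - q²`. Since `-1` is not a square in `k`, the leading
coefficients of `p²` and `(y q)²` cannot cancel, so `N z` has even degree and vanishes only for
`z = 0`. Hence the ring is a domain, and `ω`, of norm `y² - 1`, is irreducible: a factorisation
would split the degree `2` into two even degrees, so one factor has constant norm and is a unit.
But `ω² = (1 - y)(1 + y)` while `ω` divides neither factor, so `ω` is not prime.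
-/

open Polynomial

section

variable {k : Type*} [Field k]

theorem sq_add_sq_ne_zero_of_ne_zero (hk : ¬ ∃ x : k, x ^ 2 = -1) {x : k} (hx : x ≠ 0) (y : k) :
    x ^ 2 + y ^ 2 ≠ 0 :=
  fun h ↦ hk ⟨y / x, by field_simp; linear_combination h⟩

namespace Polynomial

theorem natDegree_sq_add_sq (hk : ¬ ∃ x : k, x ^ 2 = -1) (f g : k[X]) :
    (f ^ 2 + g ^ 2).natDegree = 2 * max f.natDegree g.natDegree := by
  rcases eq_or_ne f 0 with rfl | hf
  · simp [natDegree_pow]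
  rcases lt_trichotomy f.natDegree g.natDegree with h | h | h
  · rw [natDegree_add_eq_right_of_natDegree_lt (by simpa [natDegree_pow]), natDegree_pow,
      max_eq_right h.le]
  · rw [← h, max_self]
    refine natDegree_eq_of_le_of_coeff_ne_zero ?_ ?_
    · refine (natDegree_add_le _ _).trans (max_le ?_ ?_) <;> rw [natDegree_pow, h]
    · rw [coeff_add, coeff_pow_mul_natDegree, h, coeff_pow_mul_natDegree]
      exact sq_add_sq_ne_zero_of_ne_zero hk (leadingCoeff_ne_zero.mpr hf) _
  · rw [natDegree_add_eq_left_of_natDegree_lt (by simpa [natDegree_pow]), natDegree_pow,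
      max_eq_left h.le]

theorem natDegree_C_sub_X_sq (c : k) : (C c - X ^ 2 : k[X]).natDegree = 2 := by
  rw [← neg_sub, natDegree_neg, natDegree_X_pow_sub_C]

end Polynomial

namespace QuadraticAlgebra

section CommRing

variable {R : Type*} [CommRing R] {a b : R}

theorem norm_omega : norm (ω : QuadraticAlgebra R a b) = -a := by
  simp [norm_def]

theorem norm_eq_re_sq_of_im_eq_zero {z : QuadraticAlgebra R a b} (hz : z.im = 0) :
    norm z = z.re ^ 2 := by
  simp [norm_def, hz, sq]

theorem omega_dvd_algebraMap_iff {r : R} :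
    (ω : QuadraticAlgebra R a b) ∣ algebraMap R _ r ↔ a ∣ r := by
  constructor
  · rintro ⟨z, hz⟩
    exact ⟨z.im, by simpa [mul_comm] using congrArg re hz⟩
  · rintro ⟨s, rfl⟩
    exact ⟨⟨-(b * s), s⟩, by ext <;> simp⟩

end CommRing

theorem isUnit_iff_natDegree_norm_eq_zero {a b : k[X]} {z : QuadraticAlgebra k[X] a b}
    (hz : norm z ≠ 0) : IsUnit z ↔ (norm z).natDegree = 0 := by
  rw [isUnit_iff_norm_isUnit, isUnit_iff_degree_eq_zero]
  exact degree_eq_iff_natDegree_eq hz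

variable {c : k}

theorem natDegree_norm_of_im_ne_zero (hk : ¬ ∃ x : k, x ^ 2 = -1)
    {z : QuadraticAlgebra k[X] (C c - X ^ 2) 0} (hz : z.im ≠ 0) :
    (norm z).natDegree = 2 * max z.re.natDegree (z.im.natDegree + 1) := by
  have hnorm : norm z = (z.re ^ 2 + (X * z.im) ^ 2) - C c * z.im ^ 2 := by
    rw [norm_def]; ring
  rw [hnorm, natDegree_sub_eq_left_of_natDegree_lt, natDegree_sq_add_sq hk, natDegree_X_mul hz]
  rw [natDegree_sq_add_sq hk, natDegree_X_mul hz]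
  refine (natDegree_C_mul_le _ _).trans_lt ?_
  rw [natDegree_pow]
  omega

theorem even_natDegree_norm (hk : ¬ ∃ x : k, x ^ 2 = -1)
    (z : QuadraticAlgebra k[X] (C c - X ^ 2) 0) : Even (norm z).natDegree := by
  by_cases him : z.im = 0
  · simp [norm_eq_re_sq_of_im_eq_zero him, natDegree_pow]
  · simp [natDegree_norm_of_im_ne_zero hk him]

theorem norm_eq_zero_iff (hk : ¬ ∃ x : k, x ^ 2 = -1)
    {z : QuadraticAlgebra k[X] (C c - X ^ 2) 0} : norm z = 0 ↔ z = 0 := by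
  refine ⟨fun h ↦ ?_, fun h ↦ by simp [h]⟩
  by_cases him : z.im = 0
  · rw [norm_eq_re_sq_of_im_eq_zero him, sq_eq_zero_iff] at h
    exact QuadraticAlgebra.ext h him
  · have := natDegree_norm_of_im_ne_zero hk him
    rw [h, natDegree_zero] at this
    omega

theorem isDomain (hk : ¬ ∃ x : k, x ^ 2 = -1) :
    IsDomain (QuadraticAlgebra k[X] (C c - X ^ 2) 0) :=
  have : NoZeroDivisors (QuadraticAlgebra k[X] (C c - X ^ 2) 0) :=
    ⟨fun {z w} h ↦ by simpa [norm_eq_zero_iff hk] using congrArg norm h⟩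
  NoZeroDivisors.to_isDomain _

theorem irreducible_omega (hk : ¬ ∃ x : k, x ^ 2 = -1) :
    Irreducible (ω : QuadraticAlgebra k[X] (C c - X ^ 2) 0) := by
  have hdeg : (norm (ω : QuadraticAlgebra k[X] (C c - X ^ 2) 0)).natDegree = 2 := by
    rw [norm_omega, natDegree_neg, natDegree_C_sub_X_sq]
  have hne : norm (ω : QuadraticAlgebra k[X] (C c - X ^ 2) 0) ≠ 0 := fun h ↦ by simp [h] at hdeg
  refine ⟨fun h ↦ by simp [(isUnit_iff_natDegree_norm_eq_zero hne).mp h] at hdeg, fun s t hst ↦ ?_⟩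
  rw [hst, map_mul] at hdeg hne
  obtain ⟨hs, ht⟩ := mul_ne_zero_iff.mp hne
  rw [isUnit_iff_natDegree_norm_eq_zero hs, isUnit_iff_natDegree_norm_eq_zero ht]
  rw [natDegree_mul hs ht] at hdeg
  obtain ⟨m, hm⟩ := even_natDegree_norm hk s
  obtain ⟨n, hn⟩ := even_natDegree_norm hk t
  omega

theorem not_prime_omega (hc : IsSquare c) :
    ¬ Prime (ω : QuadraticAlgebra k[X] (C c - X ^ 2) 0) := by
  obtain ⟨d, rfl⟩ := hc
  intro hp
  have hdvd : (ω : QuadraticAlgebra k[X] (C (d * d) - X ^ 2) 0) ∣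
      algebraMap _ _ (C d - X) * algebraMap _ _ (C d + X) :=
    ⟨ω, by
      rw [← map_mul, omega_mul_omega_eq_algebraMap, map_zero, zero_mul, add_zero,
        Polynomial.C_mul]
      congr 1
      ring⟩
  have hndvd {f : k[X]} (hf : f.natDegree = 1) :
      ¬ (ω : QuadraticAlgebra k[X] (C (d * d) - X ^ 2) 0) ∣ algebraMap _ _ f := by
    rw [omega_dvd_algebraMap_iff]
    intro h
    have := natDegree_le_of_dvd h (by rintro rfl; simp at hf)
    rw [natDegree_C_sub_X_sq, hf] at this
    omega
  rcases hp.dvd_or_dvd hdvd with h | h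
  · exact hndvd (by rw [← neg_sub, natDegree_neg, natDegree_X_sub_C]) h
  · exact hndvd (by rw [add_comm, natDegree_X_add_C]) h

end QuadraticAlgebra

open QuadraticAlgebra

abbrev CircleRing (k : Type*) [Field k] : Type _ :=
  MvPolynomial (Fin 2) k ⧸ Ideal.span {(MvPolynomial.X 0 : MvPolynomial (Fin 2) k) ^ 2 +
    MvPolynomial.X 1 ^ 2 - 1}

namespace CircleRing

variable (k) in
theorem mk_X_sq_add_mk_X_sq :
    (Ideal.Quotient.mk _ (MvPolynomial.X 0) : CircleRing k) ^ 2 +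
      Ideal.Quotient.mk _ (MvPolynomial.X 1) ^ 2 = 1 := by
  rw [← sub_eq_zero, ← map_pow, ← map_pow, ← map_add, ← map_one (Ideal.Quotient.mk _), ← map_sub,
    Ideal.Quotient.eq_zero_iff_mem]
  exact Ideal.mem_span_singleton_self _

variable (k) in
noncomputable def toQuadraticAlgebra :
    CircleRing k →ₐ[k] QuadraticAlgebra k[X] (C 1 - X ^ 2) 0 :=
  Ideal.Quotient.liftₐ _ (MvPolynomial.aeval ![ω, algebraMap k[X] _ X]) fun p hp ↦ by
    obtain ⟨q, rfl⟩ := Ideal.mem_span_singleton'.mp hp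
    have hω : (ω : QuadraticAlgebra k[X] (C 1 - X ^ 2) 0) ^ 2 =
        algebraMap _ _ (1 - X ^ 2 : k[X]) := by
      ext <;> simp [sq]
    simp [hω]

variable (k) in
noncomputable def ofQuadraticAlgebra :
    QuadraticAlgebra k[X] (C 1 - X ^ 2) 0 →+* CircleRing k :=
  letI : Algebra k[X] (CircleRing k) :=
    (aeval (Ideal.Quotient.mk _ (MvPolynomial.X 1) : CircleRing k)).toRingHom.toAlgebra
  (QuadraticAlgebra.lift ⟨Ideal.Quotient.mk _ (MvPolynomial.X 0), by
    simp only [Algebra.smul_def, RingHom.algebraMap_toAlgebra, AlgHom.toRingHom_eq_coe,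
      RingHom.coe_coe, map_sub, map_one, map_pow, aeval_X, map_zero, zero_mul, mul_one, add_zero]
    linear_combination mk_X_sq_add_mk_X_sq k⟩).toRingHom

theorem toQuadraticAlgebra_mk (p : MvPolynomial (Fin 2) k) :
    toQuadraticAlgebra k (Ideal.Quotient.mk _ p) = MvPolynomial.aeval ![ω, algebraMap k[X] _ X] p :=
  rfl

theorem ofQuadraticAlgebra_apply (z : QuadraticAlgebra k[X] (C 1 - X ^ 2) 0) :
    ofQuadraticAlgebra k z = aeval (Ideal.Quotient.mk _ (MvPolynomial.X 1)) z.re +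
      aeval (Ideal.Quotient.mk _ (MvPolynomial.X 1)) z.im *
        Ideal.Quotient.mk _ (MvPolynomial.X 0) := by
  simp [ofQuadraticAlgebra, Algebra.smul_def, RingHom.algebraMap_toAlgebra]

theorem toQuadraticAlgebra_ofQuadraticAlgebra (z : QuadraticAlgebra k[X] (C 1 - X ^ 2) 0) :
    toQuadraticAlgebra k (ofQuadraticAlgebra k z) = z := by
  have hy : toQuadraticAlgebra k (Ideal.Quotient.mk _ (MvPolynomial.X 1)) =
      algebraMap k[X] _ X := by
    simp [toQuadraticAlgebra_mk]
  rw [ofQuadraticAlgebra_apply, map_add, map_mul, ← aeval_algHom_apply, ← aeval_algHom_apply, hy,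
    aeval_algebraMap_apply, aeval_algebraMap_apply]
  ext <;> simp [toQuadraticAlgebra_mk]

theorem ofQuadraticAlgebra_toQuadraticAlgebra (p : CircleRing k) :
    ofQuadraticAlgebra k (toQuadraticAlgebra k p) = p := by
  obtain ⟨p, rfl⟩ := Ideal.Quotient.mk_surjective p
  induction p using MvPolynomial.induction_on with
  | C r =>
    rw [← MvPolynomial.algebraMap_eq, Ideal.Quotient.mk_algebraMap, AlgHom.commutes,
      IsScalarTower.algebraMap_apply k k[X] (QuadraticAlgebra k[X] (C 1 - X ^ 2) 0)]
    simp [ofQuadraticAlgebra_apply]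
  | add p q hp hq => simp only [map_add, hp, hq]
  | mul_X p i hp =>
    simp only [map_mul, hp]
    fin_cases i <;> simp [ofQuadraticAlgebra_apply, toQuadraticAlgebra_mk]

variable (k) in
noncomputable def equivQuadraticAlgebra :
    CircleRing k ≃+* QuadraticAlgebra k[X] (C 1 - X ^ 2) 0 :=
  RingEquiv.ofRingHom (toQuadraticAlgebra k).toRingHom (ofQuadraticAlgebra k)
    (RingHom.ext toQuadraticAlgebra_ofQuadraticAlgebra)
    (RingHom.ext ofQuadraticAlgebra_toQuadraticAlgebra)

end CircleRing

end

theorem stmt_12 {k : Type*} [Field k] (hk : ¬ ∃ x : k, x ^ 2 = -1) :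
    ∃ hd : IsDomain (MvPolynomial (Fin 2) k ⧸
        Ideal.span {(MvPolynomial.X 0 : MvPolynomial (Fin 2) k) ^ 2 +
          MvPolynomial.X 1 ^ 2 - 1}),
      ¬ (letI := hd;
        UniqueFactorizationMonoid (MvPolynomial (Fin 2) k ⧸
          Ideal.span {(MvPolynomial.X 0 : MvPolynomial (Fin 2) k) ^ 2 +
            MvPolynomial.X 1 ^ 2 - 1})) := by
  have := QuadraticAlgebra.isDomain (c := (1 : k)) hk
  let e := CircleRing.equivQuadraticAlgebra k
  refine ⟨e.toMulEquiv.isDomain _, fun hU ↦ ?_⟩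
  have hirr : Irreducible (e.symm QuadraticAlgebra.omega) :=
    (MulEquiv.irreducible_iff e.symm).mpr (QuadraticAlgebra.irreducible_omega hk)
  exact QuadraticAlgebra.not_prime_omega IsSquare.one
    ((MulEquiv.prime_iff e.symm).mp (UniqueFactorizationMonoid.irreducible_iff_prime.mp hirr))
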